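/- Partial converse of the resolvent equation: let R be a unital commutative ring, B ⊂ A unital R-algebras, π = [[*, b],[*, a]]/~ ∈ Gr_1(A), b' ∈ A with b'b = 1, and f an nc function on an admissible nc set Ω over Gr(B) with values in M(A). Suppose that for each n and each β ∈ Ω ∩ M_n(B) there is c(β) ∈ GL_n(A) with f(β̃) = (b ⊗ I_n)c(β), and that f satisfies (Δ̃f)(σ;σ')(X) = −f(σ)Xf(σ') for all σ, σ' ∈ Ω, together with the initial condition f(β̃₀) = b(β₀b − a)^{-1} for some β₀ ∈ Ω ∩ B. Then Ω ∩ M(B) ⊂ ρ̃(π;B) ∩ M(B), and f(β̃) = R̃(π;B)(β̃) = (b ⊗ I_n)(β(b ⊗ I_n) − a ⊗ I_n)^{-1} for every β ∈ Ω ∩ M_n(B). -/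

import Mathlib

open Matrix

/-- `n × n` matrices over `A`. -/
abbrev Mat (A : Type) (n : ℕ) : Type := Matrix (Fin n) (Fin n) A

/-- `m × m` block matrices with `n × n` blocks over `A`, i.e. `M_m(M_n(A))`. -/
abbrev BMat (A : Type) (m n : ℕ) : Type := Matrix (Fin m) (Fin m) (Mat A n)

section NC

variable {R : Type} [CommRing R] {A : Type} [Ring A]

/-- Membership in the subgroup `H^{(d;m)}_n(A)` of invertible block lower-triangular
matrices `[[X,0],[Y,Z]]` with `X ∈ GL_{m-d}`, `Z ∈ GL_d`. -/
def memH (m d n : ℕ) (hd : d ≤ m) (Γ : BMat A m n) : Prop :=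
  IsUnit Γ ∧
  (∀ i j : Fin m, (i : ℕ) < m - d → m - d ≤ (j : ℕ) → Γ i j = 0) ∧
  IsUnit (Matrix.of fun i j : Fin (m - d) =>
    Γ ⟨(i : ℕ), lt_of_lt_of_le i.isLt (Nat.sub_le m d)⟩
      ⟨(j : ℕ), lt_of_lt_of_le j.isLt (Nat.sub_le m d)⟩) ∧
  IsUnit (Matrix.of fun i j : Fin d =>
    Γ ⟨m - d + (i : ℕ), by have := i.isLt; omega⟩
      ⟨m - d + (j : ℕ), by have := j.isLt; omega⟩)

/-- The relation `X ~ Y` iff `X = Y Γ` for some `Γ ∈ H^{(d;m)}_n(A)`. -/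
def grel (m d n : ℕ) (hd : d ≤ m) (X Y : BMat A m n) : Prop :=
  ∃ Γ : BMat A m n, memH m d n hd Γ ∧ X = Y * Γ

/-- Direct sum of square matrices. -/
def dsumMat {n n' : ℕ} (X : Mat A n) (Y : Mat A n') : Mat A (n + n') :=
  Matrix.reindex finSumFinEquiv finSumFinEquiv (Matrix.fromBlocks X 0 0 Y)

/-- Entrywise block direct sum `X ⊕̃ Y` of elements of `M_m(M_n(A))`, `M_m(M_{n'}(A))`. -/
def dsum {m n n' : ℕ} (X : BMat A m n) (Y : BMat A m n') : BMat A m (n + n') :=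
  Matrix.of fun i j => dsumMat (X i j) (Y i j)

/-- Direct sum of square matrices with entries in a module. -/
def dsumW {W : Type} [AddCommMonoid W] {n n' : ℕ}
    (X : Matrix (Fin n) (Fin n) W) (Y : Matrix (Fin n') (Fin n') W) :
    Matrix (Fin (n + n')) (Fin (n + n')) W :=
  Matrix.reindex finSumFinEquiv finSumFinEquiv (Matrix.fromBlocks X 0 0 Y)

/-- Block upper triangular matrix `[[P, H],[0, Q]]`. -/
def triW {W : Type} [AddCommMonoid W] {n n' : ℕ}
    (P : Matrix (Fin n) (Fin n) W) (H : Matrix (Fin n) (Fin n') W)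
    (Q : Matrix (Fin n') (Fin n') W) :
    Matrix (Fin (n + n')) (Fin (n + n')) W :=
  Matrix.reindex finSumFinEquiv finSumFinEquiv (Matrix.fromBlocks P H 0 Q)

/-- The unipotent upper triangular matrix `[[I, T],[0, I]]` over `R`. -/
def uptri (R : Type) [CommRing R] {p q : ℕ} (T : Matrix (Fin p) (Fin q) R) :
    Matrix (Fin (p + q)) (Fin (p + q)) R :=
  Matrix.reindex finSumFinEquiv finSumFinEquiv (Matrix.fromBlocks 1 T 0 1)

/-- Left multiplication of a representative by `s^{⊕ m}` for a scalar matrix `s` over `R`: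
the similarity action on the nc Grassmannian. -/
def simAct [Algebra R A] {m N : ℕ} (s : Matrix (Fin N) (Fin N) R) (X : BMat A m N) :
    BMat A m N :=
  Matrix.of fun i j => s.map (algebraMap R A) * X i j

/-- Multiplication of a matrix over an `R`-module `W` by a matrix over `R` on the left. -/
def rmulL {W : Type} [AddCommMonoid W] [Module R W] {p q r : ℕ}
    (s : Matrix (Fin p) (Fin q) R) (X : Matrix (Fin q) (Fin r) W) :
    Matrix (Fin p) (Fin r) W :=
  Matrix.of fun i j => ∑ k, s i k • X k j

/-- Multiplication of a matrix over an `R`-module `W` by a matrix over `R` on the right. -/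
def rmulR {W : Type} [AddCommMonoid W] [Module R W] {p q r : ℕ}
    (X : Matrix (Fin p) (Fin q) W) (s : Matrix (Fin q) (Fin r) R) :
    Matrix (Fin p) (Fin r) W :=
  Matrix.of fun i j => ∑ k, s k j • X i k

/-- Vertical concatenation of matrices. -/
def vcat {α : Type} {p p' q : ℕ} (X : Matrix (Fin p) (Fin q) α)
    (Y : Matrix (Fin p') (Fin q) α) : Matrix (Fin (p + p')) (Fin q) α :=
  Matrix.of fun i j =>
    if h : (i : ℕ) < p then X ⟨(i : ℕ), h⟩ j
    else Y ⟨(i : ℕ) - p, by have := i.isLt; omega⟩ j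

/-- The affine embedding `X ↦ [[0, I],[I, X]]` in the case `(d;m) = (1;2)`. -/
def affEmb {n : ℕ} (X : Mat A n) : BMat A 2 n := !![0, 1; 1, X]

/-- The matrix `[[0, X],[0, 0]] ∈ M_{n+n'}(A)` with `X ∈ M_{n,n'}(A)` in the upper right
corner. -/
def cornerMat {n n' : ℕ} (X : Matrix (Fin n) (Fin n') A) : Mat A (n + n') :=
  Matrix.reindex finSumFinEquiv finSumFinEquiv (Matrix.fromBlocks 0 X 0 0)

/-- The representative `(P;Q)_{u,v}(X)` of the element `(σ;σ')_{u,v}(X)`: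
`P ⊕̃ Q + Σ_{j=1}^d [[0, X Q_{v, m-d+j}],[0,0]] ⊗ e^{(m)}_{d+u, m-d+j}`. -/
def ins {m d n n' : ℕ} (hd : d ≤ m) (u : Fin (m - d)) (v : Fin d)
    (P : BMat A m n) (Q : BMat A m n') (X : Matrix (Fin n) (Fin n') A) :
    BMat A m (n + n') :=
  dsum P Q + Matrix.of fun (i j : Fin m) =>
    if (i : ℕ) = d + (u : ℕ) ∧ m - d ≤ (j : ℕ) then
      cornerMat (X * Q ⟨(v : ℕ), lt_of_lt_of_le v.isLt hd⟩ j)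
    else 0

/-- The matrix unit `e^{(md,d)}_{u,v} ⊗ X`. -/
def eMat {md d : ℕ} {n : ℕ} (u : Fin md) (v : Fin d) (X : Mat A n) :
    Matrix (Fin md) (Fin d) (Mat A n) :=
  Matrix.of fun i j => if i = u ∧ j = v then X else 0

/-- The block matrix `[[I_d ⊗ I_n, 0],[-Y, I_{m-d} ⊗ I_n]]` used to define `σ(Y)`. -/
def shiftMat {m d n : ℕ} (hd : d ≤ m) (Y : Matrix (Fin (m - d)) (Fin d) (Mat A n)) :
    BMat A m n :=
  Matrix.of fun i j =>
    (if i = j then (1 : Mat A n) else 0) +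
    (if h : d ≤ (i : ℕ) ∧ (j : ℕ) < d then
      -Y ⟨(i : ℕ) - d, by have := i.isLt; omega⟩ ⟨(j : ℕ), h.2⟩
    else 0)

/-- A family `C` of sets of representatives is an nc set over `Gr^{(d;m)}(A)`:
it consists of invertible matrices, is saturated under the relation `~`
(i.e. it is a set of equivalence classes), and is closed under direct sums. -/
def IsNCSetCarrier {m d : ℕ} (hd : d ≤ m) (C : ∀ n, Set (BMat A m n)) : Prop :=
  (∀ n, ∀ a ∈ C n, IsUnit a) ∧
  (∀ n, ∀ a b : BMat A m n, grel m d n hd a b → (a ∈ C n ↔ b ∈ C n)) ∧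
  (∀ n n', ∀ a ∈ C n, ∀ b ∈ C n', dsum a b ∈ C (n + n'))

/-- `f` is an nc function on the nc set (with carrier) `C` over `Gr^{(d;m)}(A)`:
it descends to equivalence classes, preserves direct sums, and is similarity preserving. -/
def IsNCFun (R : Type) [CommRing R] [Algebra R A] {W : Type} [AddCommMonoid W] [Module R W]
    {m d : ℕ} (hd : d ≤ m) (C : ∀ n, Set (BMat A m n))
    (f : ∀ n, BMat A m n → Matrix (Fin n) (Fin n) W) : Prop :=
  (∀ n, ∀ a ∈ C n, ∀ b ∈ C n, grel m d n hd a b → f n a = f n b) ∧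
  (∀ n n', ∀ a ∈ C n, ∀ b ∈ C n', f (n + n') (dsum a b) = dsumW (f n a) (f n' b)) ∧
  (∀ n (s : (Matrix (Fin n) (Fin n) R)ˣ), ∀ a ∈ C n,
    simAct (s : Matrix (Fin n) (Fin n) R) a ∈ C n →
    f n (simAct (s : Matrix (Fin n) (Fin n) R) a) =
      rmulR (rmulL (s : Matrix (Fin n) (Fin n) R) (f n a))
        ((s⁻¹ : (Matrix (Fin n) (Fin n) R)ˣ) : Matrix (Fin n) (Fin n) R))

/-- `(u,v)`-admissibility of an nc set. -/
def Admissible (R : Type) [CommRing R] [Algebra R A] {m d : ℕ} (hd : d ≤ m)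
    (C : ∀ n, Set (BMat A m n)) (u : Fin (m - d)) (v : Fin d) : Prop :=
  ∀ n n' (a : BMat A m n) (b : BMat A m n') (X : Matrix (Fin n) (Fin n') A),
    a ∈ C n → b ∈ C n' →
    ∃ r : Rˣ, ins hd u v a b ((r : R) • X) ∈ C (n + n')

/-- The similarity-invariant envelope of an nc set. -/
def envC (R : Type) [CommRing R] [Algebra R A] {m d : ℕ} (hd : d ≤ m)
    (C : ∀ n, Set (BMat A m n)) : ∀ n, Set (BMat A m n) :=
  fun n => {x | ∃ (s : (Matrix (Fin n) (Fin n) R)ˣ) (a : BMat A m n),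
    a ∈ C n ∧ grel m d n hd x (simAct (s : Matrix (Fin n) (Fin n) R) a)}

end NC

section Res

variable {R : Type} [CommRing R] {A : Type} [Ring A] [Algebra R A]

/-- Entrywise inclusion `M_m(M_n(B)) → M_m(M_n(A))` for a subalgebra `B ⊆ A`. -/
def bmap (D : Subalgebra R A) {m n : ℕ} (b : BMat (↥D) m n) : BMat A m n :=
  Matrix.of fun i j => (b i j).map (fun x => (x : A))

/-- Entrywise inclusion for rectangular matrices over a subalgebra. -/
def rcmap (D : Subalgebra R A) {n n' : ℕ} (X : Matrix (Fin n) (Fin n') ↥D) :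
    Matrix (Fin n) (Fin n') A :=
  X.map (fun x => (x : A))

/-- `X` is invertible in `M_m(M_n(B))` for the subalgebra `B = D ⊆ A`. -/
def invIn (D : Subalgebra R A) {m n : ℕ} (X : BMat A m n) : Prop :=
  (∀ i j k l, X i j k l ∈ D) ∧
  ∃ Y : BMat A m n, (∀ i j k l, Y i j k l ∈ D) ∧ X * Y = 1 ∧ Y * X = 1

/-- The amplification `a^{⊕̃ n}` of an element `a ∈ M_m(A) = M_m(M_1(A))`. -/
def ampl {m : ℕ} (a : BMat A m 1) (n : ℕ) : BMat A m n :=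
  Matrix.of fun i j => Matrix.diagonal (fun _ => a i j 0 0)

/-- The matrix `r^{(d;m)}(P;Q)`: first `m-d` block columns are the last `m-d` block
columns of `P`, last `d` block columns are the last `d` block columns of `Q`. -/
def rmat {m d n : ℕ} (hd : d ≤ m) (P Q : BMat A m n) : BMat A m n :=
  Matrix.of fun i j =>
    if h : (j : ℕ) < m - d then P i ⟨d + (j : ℕ), by omega⟩ else Q i j

/-- The value `[B_{v,m-d+1},…,B_{v,m}] ⋅ ζ_u` of the `(d;m)`-Grassmannian resolvent,
where `ζ_u` is the `u`-th bottom block column of the inverse `Rinv` of an `r`-matrix. -/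
def resVal {m d n : ℕ} (hd : d ≤ m) (v : Fin d) (u : Fin (m - d))
    (Bm Rinv : BMat A m n) : Mat A n :=
  ∑ j : Fin d,
    Bm ⟨(v : ℕ), lt_of_lt_of_le v.isLt hd⟩ ⟨m - d + (j : ℕ), by have := j.isLt; omega⟩ *
    Rinv ⟨m - d + (j : ℕ), by have := j.isLt; omega⟩ ⟨d + (u : ℕ), by have := u.isLt; omega⟩

/-- Membership in the `(d;m)`-Grassmannian `B`-resolvent set of `π` (represented by `p`):
`b` represents an element of `Gr^{(d;m)}_n(B)` such that `π^{⊕n}` and `b` are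
transversal in `A`. -/
def ResMem {m d : ℕ} (hd : d ≤ m) (p : BMat A m 1) (D : Subalgebra R A) {n : ℕ}
    (b : BMat (↥D) m n) : Prop :=
  IsUnit b ∧ IsUnit (rmat hd (ampl p n) (bmap D b))

end Res

/-- A scalar as a `1 × 1` matrix. -/
def constMat' {S : Type} (x : S) : Mat S 1 := Matrix.of fun _ _ => x

/-!
Admissibility puts `[[β, r(δ - β)], [0, δ]]` into `Ω` for some unit `r`. This point is the
conjugate of `β ⊕ δ` by the shear `[[1, r], [0, 1]]`, so similarity invariance and additivity of
`f` give it the corner `r (f(δ) - f(β))`, while the difference-differential equation gives the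
corner `-r f(β) (δ - β) f(δ)`. Hence `f` satisfies the resolvent identity
`f(δ) - f(β) = -f(β) (δ - β) f(δ)`. For `δ = β₀ ⊗ Iₙ`, where the initial condition gives
`f(δ) = b (δ b - a)⁻¹`, and `f(β) = b c(β)`, multiplying the identity by `b'` on the left and by
`δ b - a` on the right yields `c(β) (β b - a) = 1`. As `c(β)` is invertible, it is the two-sided
inverse of `β b - a`, and it also inverts the transversality matrix `[[b, 1], [a, β]]`.
-/

section BlockTriangular

variable {S : Type} [Ring S] {n n' : ℕ}

lemma triW_mul_triW (P₁ : Mat S n) (H₁ : Matrix (Fin n) (Fin n') S) (Q₁ : Mat S n')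
    (P₂ : Mat S n) (H₂ : Matrix (Fin n) (Fin n') S) (Q₂ : Mat S n') :
    triW P₁ H₁ Q₁ * triW P₂ H₂ Q₂ = triW (P₁ * P₂) (P₁ * H₂ + H₁ * Q₂) (Q₁ * Q₂) := by
  simp [triW, Matrix.submatrix_mul_equiv, Matrix.fromBlocks_multiply]

lemma triW_one_zero_one : triW 1 (0 : Matrix (Fin n) (Fin n') S) 1 = 1 := by
  simp [triW, Matrix.fromBlocks_one]

lemma triW_add (P₁ P₂ : Mat S n) (H₁ H₂ : Matrix (Fin n) (Fin n') S) (Q₁ Q₂ : Mat S n') :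
    triW P₁ H₁ Q₁ + triW P₂ H₂ Q₂ = triW (P₁ + P₂) (H₁ + H₂) (Q₁ + Q₂) := by
  have h := Matrix.fromBlocks_add P₁ H₁ 0 Q₁ P₂ H₂ 0 Q₂
  rw [add_zero] at h
  rw [triW, triW, triW, ← h]
  rfl

lemma triW_inj {P P' : Mat S n} {H H' : Matrix (Fin n) (Fin n') S} {Q Q' : Mat S n'} :
    triW P H Q = triW P' H' Q' ↔ P = P' ∧ H = H' ∧ Q = Q' := by
  rw [triW, triW, (reindex _ _).injective.eq_iff, Matrix.fromBlocks_inj]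
  simp

lemma triW_map {T : Type} [Ring T] (g : S →+* T) (P : Mat S n) (H : Matrix (Fin n) (Fin n') S)
    (Q : Mat S n') : (triW P H Q).map g = triW (P.map g) (H.map g) (Q.map g) := by
  simp [triW, ← Matrix.submatrix_map, Matrix.fromBlocks_map]

lemma triW_diagonal_const (z : S) :
    triW (diagonal fun _ : Fin n => z) 0 (diagonal fun _ : Fin n' => z) =
      diagonal fun _ => z := by
  rw [triW, Matrix.fromBlocks_diagonal, Matrix.reindex_apply,
    Matrix.submatrix_diagonal _ _ finSumFinEquiv.symm.injective]
  congr 1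
  funext i
  simp only [Function.comp_apply]
  cases finSumFinEquiv.symm i <;> rfl

end BlockTriangular

section Shear

variable {R : Type} [CommRing R]

def shear {n n' : ℕ} (T : Matrix (Fin n) (Fin n') R) : (Mat R (n + n'))ˣ where
  val := triW 1 T 1
  inv := triW 1 (-T) 1
  val_inv := by simp [triW_mul_triW, triW_one_zero_one]
  inv_val := by simp [triW_mul_triW, triW_one_zero_one]

variable {S : Type} [Ring S] [Algebra R S] {n : ℕ}

lemma map_smul_one (r : R) :
    (r • (1 : Mat R n)).map (algebraMap R S) = r • (1 : Mat S n) := by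
  ext i j
  by_cases h : i = j <;> simp [h, Algebra.algebraMap_eq_smul_one]

lemma shear_smul_one_map (r : R) :
    ((shear (r • (1 : Mat R n)) : Mat R (n + n))).map (algebraMap R S) =
      triW 1 (r • 1) 1 := by
  simp [shear, triW_map, map_smul_one]

lemma shear_smul_one_inv_map (r : R) :
    (((shear (r • (1 : Mat R n)))⁻¹ : (Mat R (n + n))ˣ) : Mat R (n + n)).map
      (algebraMap R S) = triW 1 ((-r) • 1) 1 := by
  simp [shear, triW_map, ← neg_smul, map_smul_one]

lemma triW_shear_conj (r : R) (P Q : Mat S n) :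
    triW 1 (r • 1) 1 * triW P 0 Q * triW 1 ((-r) • 1) 1 = triW P (r • (Q - P)) Q := by
  rw [triW_mul_triW, triW_mul_triW]
  congr 1 <;> simp only [one_mul, mul_one, mul_zero, zero_add]
  rw [mul_smul_comm, mul_one, smul_mul_assoc, one_mul, neg_smul, smul_sub]
  abel

end Shear

section AffineEmbedding

variable {S : Type} [Ring S] {n n' : ℕ}

lemma dsum_affEmb (x : Mat S n) (y : Mat S n') :
    dsum (affEmb x) (affEmb y) = affEmb (triW x 0 y) := by
  have h0 : dsumMat (0 : Mat S n) (0 : Mat S n') = 0 := by simp [dsumMat]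
  have h1 : dsumMat (1 : Mat S n) (1 : Mat S n') = 1 := triW_one_zero_one
  have hxy : dsumMat x y = triW x 0 y := rfl
  ext i j : 1
  fin_cases i <;> fin_cases j <;> simp [dsum, affEmb, h0, h1, hxy]

lemma ins_affEmb (hd : 1 ≤ 2) (u : Fin (2 - 1)) (v : Fin 1) (x : Mat S n) (y : Mat S n')
    (Z : Matrix (Fin n) (Fin n') S) :
    ins hd u v (affEmb x) (affEmb y) Z = affEmb (triW x Z y) := by
  have hv : v = 0 := Subsingleton.elim _ _
  have hZ : cornerMat Z = triW 0 Z 0 := rfl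
  rw [ins, dsum_affEmb]
  ext i j : 1
  fin_cases i <;> fin_cases j <;> simp [affEmb, hv, hZ]
  simpa using triW_add x 0 0 Z y 0

lemma memH_diagonal {m d : ℕ} (hd : d ≤ m) {U : Mat S n} (hU : IsUnit U) :
    memH m d n hd (diagonal fun _ => U) := by
  have hdiag : ∀ k, IsUnit (diagonal fun _ : Fin k => U) :=
    fun k => (Pi.isUnit_iff.2 fun _ => hU).map (diagonalRingHom (Fin k) (Mat S n))
  refine ⟨hdiag m, fun i j hi hj => diagonal_apply_ne _ fun h => ?_, ?_, ?_⟩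
  · rw [h] at hi
    omega
  · convert hdiag (m - d) using 2
    ext i j : 1
    simp [diagonal_apply, Fin.ext_iff]
  · convert hdiag d using 2
    ext i j : 1
    simp [diagonal_apply, Fin.ext_iff]

variable {R : Type} [CommRing R] [Algebra R S]

lemma grel_simAct_affEmb (hd : 1 ≤ 2) (s : (Mat R n)ˣ) (X : Mat S n) :
    grel 2 1 n hd (simAct (s : Mat R n) (affEmb X))
      (affEmb ((s : Mat R n).map (algebraMap R S) * X *
        ((s⁻¹ : (Mat R n)ˣ) : Mat R n).map (algebraMap R S))) := by
  have hinv : ((s⁻¹ : (Mat R n)ˣ) : Mat R n).map (algebraMap R S) *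
      (s : Mat R n).map (algebraMap R S) = 1 := by
    rw [← Matrix.map_mul, s.inv_mul, Matrix.map_one _ (map_zero _) (map_one _)]
  refine ⟨_, memH_diagonal hd (s.isUnit.map (algebraMap R S).mapMatrix), ?_⟩
  rw [affEmb, affEmb, diagonal_fin_two, mul_fin_two]
  ext i j : 1
  fin_cases i <;> fin_cases j <;> simp [simAct, mul_assoc, hinv, -Matrix.coe_units_inv]

end AffineEmbedding

section MatrixAction

variable {R : Type} [CommRing R] {S : Type} [Ring S] [Algebra R S] {p q r : ℕ}

lemma rmulL_eq_map_mul (s : Matrix (Fin p) (Fin q) R) (X : Matrix (Fin q) (Fin r) S) :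
    rmulL s X = s.map (algebraMap R S) * X := by
  ext i j
  simp [rmulL, Matrix.mul_apply, Algebra.smul_def]

lemma rmulR_eq_mul_map (X : Matrix (Fin p) (Fin q) S) (s : Matrix (Fin q) (Fin r) R) :
    rmulR X s = X * s.map (algebraMap R S) := by
  ext i j
  simp only [rmulR, Matrix.mul_apply, Matrix.of_apply, Matrix.map_apply, Algebra.smul_def]
  exact Finset.sum_congr rfl fun k _ => Algebra.commutes _ _

end MatrixAction

lemma constMat'_eq_diagonal {S : Type} [Zero S] (x : S) :
    constMat' x = diagonal fun _ : Fin 1 => x := by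
  ext i j
  simp [constMat', Subsingleton.elim i j]

section NCFunction

variable {R : Type} [CommRing R] {A : Type} [Ring A] [Algebra R A] {D : Subalgebra R A}
  {hd : 1 ≤ 2} {C : ∀ n, Set (BMat D 2 n)} {f : ∀ n, BMat D 2 n → Mat A n} {n : ℕ}

lemma IsNCFun.apply_affEmb_conj (hC : IsNCSetCarrier hd C) (hf : IsNCFun R hd C f)
    (s : (Mat R n)ˣ) {X : Mat D n} (hX : affEmb X ∈ C n)
    (hY : affEmb ((s : Mat R n).map (algebraMap R D) * X *
      ((s⁻¹ : (Mat R n)ˣ) : Mat R n).map (algebraMap R D)) ∈ C n) :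
    f n (affEmb ((s : Mat R n).map (algebraMap R D) * X *
      ((s⁻¹ : (Mat R n)ˣ) : Mat R n).map (algebraMap R D))) =
      (s : Mat R n).map (algebraMap R A) * f n (affEmb X) *
        ((s⁻¹ : (Mat R n)ˣ) : Mat R n).map (algebraMap R A) := by
  have hgrel := grel_simAct_affEmb hd s X
  have hmem : simAct (s : Mat R n) (affEmb X) ∈ C n := (hC.2.1 _ _ _ hgrel).2 hY
  rw [← hf.1 n _ hmem _ hY hgrel, hf.2.2 n s _ hX hmem, rmulR_eq_mul_map, rmulL_eq_map_mul]

lemma IsNCFun.resolvent_identity (hC : IsNCSetCarrier hd C) (hf : IsNCFun R hd C f)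
    (hadm : Admissible R hd C (⟨0, by norm_num⟩ : Fin (2 - 1)) (0 : Fin 1))
    (hres : ∀ (n n' : ℕ) (σ : BMat (↥D) 2 n) (σ' : BMat (↥D) 2 n'),
      σ ∈ C n → σ' ∈ C n' →
      ∀ (X : Matrix (Fin n) (Fin n') ↥D) (r : Rˣ),
        ins hd (⟨0, by norm_num⟩ : Fin (2 - 1)) (0 : Fin 1) σ σ' ((r : R) • X) ∈ C (n + n') →
        f (n + n') (ins hd (⟨0, by norm_num⟩ : Fin (2 - 1)) (0 : Fin 1) σ σ' ((r : R) • X)) =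
          triW (f n σ) ((r : R) • (-(f n σ) * rcmap D X * f n' σ')) (f n' σ'))
    {β δ : Mat D n} (hβ : affEmb β ∈ C n) (hδ : affEmb δ ∈ C n) :
    -f n (affEmb β) * rcmap D (δ - β) * f n (affEmb δ) = f n (affEmb δ) - f n (affEmb β) := by
  obtain ⟨r, hins⟩ := hadm n n _ _ (δ - β) hβ hδ
  have hfins := hres n n _ _ hβ hδ (δ - β) r hins
  rw [ins_affEmb] at hins hfins
  have hconjD := triW_shear_conj (r : R) β δ
  rw [← shear_smul_one_map, ← shear_smul_one_inv_map] at hconjD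
  have hsum : affEmb (triW β 0 δ) ∈ C (n + n) := dsum_affEmb β δ ▸ hC.2.2 _ _ _ hβ _ hδ
  have hconj := hf.apply_affEmb_conj hC _ hsum (hconjD ▸ hins)
  rw [hconjD, hfins, ← dsum_affEmb, hf.2.1 _ _ _ hβ _ hδ, shear_smul_one_map,
    shear_smul_one_inv_map] at hconj
  rw [dsumW, ← triW, triW_shear_conj, triW_inj] at hconj
  exact (r.isUnit.smul_left_cancel).1 hconj.2.1

lemma affEmb_diagonal_mem (hC : IsNCSetCarrier hd C) {x : D} (hx : affEmb (constMat' x) ∈ C 1) :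
    ∀ k : ℕ, affEmb (diagonal fun _ : Fin (k + 1) => x) ∈ C (k + 1)
  | 0 => constMat'_eq_diagonal x ▸ hx
  | k + 1 => by
    rw [← triW_diagonal_const, ← dsum_affEmb, ← constMat'_eq_diagonal]
    exact hC.2.2 _ _ _ (affEmb_diagonal_mem hC hx k) _ hx

lemma IsNCFun.apply_affEmb_diagonal (hC : IsNCSetCarrier hd C) (hf : IsNCFun R hd C f)
    {x : D} (hx : affEmb (constMat' x) ∈ C 1) {y : A}
    (hfx : f 1 (affEmb (constMat' x)) = constMat' y) :
    ∀ k : ℕ, f (k + 1) (affEmb (diagonal fun _ : Fin (k + 1) => x)) = diagonal fun _ => y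
  | 0 => by rw [← constMat'_eq_diagonal, hfx, constMat'_eq_diagonal]
  | k + 1 => by
    rw [← triW_diagonal_const, ← dsum_affEmb, ← constMat'_eq_diagonal,
      hf.2.1 _ _ _ (affEmb_diagonal_mem hC hx k) _ hx, hf.apply_affEmb_diagonal hC hx hfx k, hfx,
      constMat'_eq_diagonal, dsumW, ← triW, triW_diagonal_const]

end NCFunction

section Resolvent

variable {S : Type} [Ring S]

lemma mul_sub_eq_one_of_resolvent_identity {a b b' c w β δ : S} (hb : b' * b = 1)
    (hw : w * (δ * b - a) = 1)
    (h : -(b * c) * (δ - β) * (b * w) = b * w - b * c) :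
    c * (β * b - a) = 1 := by
  have key := congrArg (fun x => b' * x * (δ * b - a)) h
  have lhs : b' * (-(b * c) * (δ - β) * (b * w)) * (δ * b - a) = -(c * (δ - β) * b) := by
    calc _ = -((b' * b) * c * (δ - β) * b * (w * (δ * b - a))) := by noncomm_ring
      _ = _ := by rw [hb, hw, one_mul, mul_one]
  have rhs : b' * (b * w - b * c) * (δ * b - a) = 1 - c * (δ * b - a) := by
    calc _ = (b' * b) * (w * (δ * b - a)) - (b' * b) * c * (δ * b - a) := by noncomm_ring
      _ = _ := by rw [hb, hw, one_mul, one_mul]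
  simp only [lhs, rhs] at key
  calc c * (β * b - a) = c * (δ * b - a) + -(c * (δ - β) * b) := by noncomm_ring
    _ = 1 := by rw [key]; abel

lemma isUnit_fin_two_of_isUnit_mul_sub {x y z : S} (h : IsUnit (z * x - y)) :
    IsUnit !![x, 1; y, z] := by
  obtain ⟨u, hu⟩ := h
  have hl : (u⁻¹ : Sˣ) * (z * x - y) = 1 := by rw [← hu, Units.inv_mul]
  have hr : (z * x - y) * (u⁻¹ : Sˣ) = 1 := by rw [← hu, Units.mul_inv]
  set c : S := ((u⁻¹ : Sˣ) : S)
  refine ⟨⟨_, !![c * z, -c; 1 - x * c * z, x * c], ?_, ?_⟩, rfl⟩ <;>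
    rw [mul_fin_two, one_fin_two] <;> ext i j <;> fin_cases i <;> fin_cases j <;> simp
  · noncomm_ring
  · calc _ = z - (z * x - y) * c * z := by noncomm_ring
      _ = 0 := by rw [hr, one_mul, sub_self]
  · calc _ = (z * x - y) * c := by noncomm_ring
      _ = 1 := hr
  · calc _ = c * (z * x - y) := by noncomm_ring
      _ = 1 := hl
  · calc _ = x - x * (c * (z * x - y)) := by noncomm_ring
      _ = 0 := by rw [hl, mul_one, sub_self]

end Resolvent

lemma rmat_ampl_affEmb {R : Type} [CommRing R] {A : Type} [Ring A] [Algebra R A]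
    {D : Subalgebra R A} {n : ℕ} (hd : 1 ≤ 2) (P : BMat A 2 1) (β : Mat D n) :
    rmat hd (ampl P n) (bmap D (affEmb β)) =
      !![diagonal fun _ => P 0 1 0 0, 1; diagonal fun _ => P 1 1 0 0, rcmap D β] := by
  ext i j : 1
  fin_cases i <;> fin_cases j <;> simp [rmat, ampl, bmap, affEmb, rcmap]

/-- partial converse of the resolvent equation. If an nc function `f`
on an admissible nc set `Ω` over `Gr(B)` satisfies `f(β̃) = (b ⊗ I_n) c(β)` with
`c(β)` invertible, the difference-differential equation
`(Δ̃ f)(σ;σ')(X) = - f(σ) X f(σ')`, and the initial condition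
`f(β̃₀) = b (β₀ b - a)⁻¹`, then `Ω ∩ M(B) ⊆ ρ̃(π;B) ∩ M(B)` and
`f(β̃) = R̃(π;B)(β̃) = (b ⊗ I_n)(β (b ⊗ I_n) - a ⊗ I_n)⁻¹` on `Ω ∩ M(B)`. -/
theorem resolvent_converse {R : Type} [CommRing R] {A : Type} [Ring A] [Algebra R A]
    (D : Subalgebra R A) (b a b' : A) (hb'b : b' * b = 1)
    (P : BMat A 2 1)
    (hPb : P 0 1 = constMat' b) (hPa : P 1 1 = constMat' a)
    (C : ∀ n, Set (BMat (↥D) 2 n))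
    (hC : IsNCSetCarrier (show (1:ℕ) ≤ 2 by norm_num) C)
    (f : ∀ n, BMat (↥D) 2 n → Mat A n)
    (hf : IsNCFun R (show (1:ℕ) ≤ 2 by norm_num) C f)
    (hadm : Admissible R (show (1:ℕ) ≤ 2 by norm_num) C
      (⟨0, by norm_num⟩ : Fin (2 - 1)) (0 : Fin 1))
    (hc : ∀ (n : ℕ) (β : Mat (↥D) n), affEmb β ∈ C n →
      ∃ cβ : Mat A n, IsUnit cβ ∧
        f n (affEmb β) = Matrix.diagonal (fun _ => b) * cβ)
    (hres : ∀ (n n' : ℕ) (σ : BMat (↥D) 2 n) (σ' : BMat (↥D) 2 n'),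
      σ ∈ C n → σ' ∈ C n' →
      ∀ (X : Matrix (Fin n) (Fin n') ↥D) (r : Rˣ),
        ins (show (1:ℕ) ≤ 2 by norm_num) (⟨0, by norm_num⟩ : Fin (2 - 1)) (0 : Fin 1)
          σ σ' ((r : R) • X) ∈ C (n + n') →
        f (n + n') (ins (show (1:ℕ) ≤ 2 by norm_num) (⟨0, by norm_num⟩ : Fin (2 - 1))
            (0 : Fin 1) σ σ' ((r : R) • X)) =
          triW (f n σ) ((r : R) • (-(f n σ) * rcmap D X * f n' σ')) (f n' σ'))
    (β₀ : ↥D) (hβ₀ : affEmb (constMat' β₀) ∈ C 1)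
    (w₀ : A) (hw₀' : w₀ * ((β₀ : A) * b - a) = 1)
    (hf0 : f 1 (affEmb (constMat' β₀)) = constMat' (b * w₀)) :
    ∀ (n : ℕ) (β : Mat (↥D) n), affEmb β ∈ C n →
      IsUnit (rmat (show (1:ℕ) ≤ 2 by norm_num) (ampl P n) (bmap D (affEmb β))) ∧
      IsUnit (rcmap D β * Matrix.diagonal (fun _ => b) - Matrix.diagonal (fun _ => a)) ∧
      ∀ w : Mat A n,
        (rcmap D β * Matrix.diagonal (fun _ => b) - Matrix.diagonal (fun _ => a)) * w = 1 →
        w * (rcmap D β * Matrix.diagonal (fun _ => b) - Matrix.diagonal (fun _ => a)) = 1 →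
        f n (affEmb β) = Matrix.diagonal (fun _ => b) * w := by
  intro n β hβ
  rcases n with _ | m
  · exact ⟨isUnit_of_subsingleton _, isUnit_of_subsingleton _,
      fun _ _ _ => Subsingleton.elim _ _⟩
  obtain ⟨c, ⟨u, rfl⟩, hfc⟩ := hc _ β hβ
  have hfδ : f (m + 1) (affEmb (diagonal fun _ => β₀)) =
      diagonal (fun _ => b) * diagonal (fun _ => w₀) := by
    rw [hf.apply_affEmb_diagonal hC hβ₀ hf0, diagonal_mul_diagonal]
  have hid := hf.resolvent_identity hC hadm hres hβ (affEmb_diagonal_mem hC hβ₀ m)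
  have hrc : rcmap D ((diagonal fun _ => β₀) - β) = (diagonal fun _ => (β₀ : A)) - rcmap D β := by
    ext i j
    by_cases h : i = j <;> simp [rcmap, h]
  rw [hfc, hfδ, hrc] at hid
  have hcE := mul_sub_eq_one_of_resolvent_identity (a := diagonal fun _ => a)
    (b' := diagonal fun _ => b') (by simp [hb'b])
    (by rw [diagonal_mul_diagonal, diagonal_sub, diagonal_mul_diagonal]; simp [hw₀']) hid
  have hEc : _ * (u : Mat A (m + 1)) = 1 := Units.mul_eq_one_iff_inv_eq.1 hcE ▸ u.inv_mul
  refine ⟨?_, ⟨⟨_, u, hEc, hcE⟩, rfl⟩, fun w hw _ => by rw [hfc, left_inv_eq_right_inv hcE hw]⟩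
  rw [rmat_ampl_affEmb, hPb, hPa]
  exact isUnit_fin_two_of_isUnit_mul_sub ⟨⟨_, u, hEc, hcE⟩, rfl⟩
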